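/- In the greedy domination algorithm on a finite simple graph G, define w(u) = 1/|F(u)| for each vertex u, where F(u) is the set of vertices first dominated at the same greedy step as u. Then for every vertex v, Σ_{u∈N[v]} w(u) ≤ 1 + ln(1 + Δ(G)). -/

import Mathlib

/-!
If `u` is first dominated at step `i`, by the greedy vertex `x`, then `F(u)` contains every
vertex of `N[x]` not dominated before step `i`; by the greedy choice there are at least as many
of these as undominated vertices in `N[v]`, i.e. vertices of `N[v]` first dominated at step `i`
or later. Listing `N[v]` by domination step, the `k`-th vertex from the end therefore has weight
at most `1/k`, so the sum is at most `H_{|N[v]|} ≤ 1 + ln |N[v]| ≤ 1 + ln (1 + Δ)`.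
-/

open Finset

namespace SG

variable {V : Type*}

/-- Closed neighborhood of a vertex as a `Finset`. -/
def closedNbhd [Fintype V] [DecidableEq V] (G : SimpleGraph V) [DecidableRel G.Adj]
    (v : V) : Finset V :=
  insert v (G.neighborFinset v)

/-- A fractional domination: weights in `[0,1]` with each closed neighborhood of weight `≥ 1`. -/
def IsFracDom [Fintype V] [DecidableEq V] (G : SimpleGraph V) [DecidableRel G.Adj]
    (f : V → ℝ) : Prop :=
  (∀ v, 0 ≤ f v ∧ f v ≤ 1) ∧ ∀ v, 1 ≤ ∑ u ∈ closedNbhd G v, f u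

/-- The fractional domination number. -/
noncomputable def fracDomNumber [Fintype V] [DecidableEq V] (G : SimpleGraph V)
    [DecidableRel G.Adj] : ℝ :=
  sInf {x | ∃ f, IsFracDom G f ∧ x = ∑ v, f v}

/-- A dominating set: every vertex not in `S` is adjacent to some vertex of `S`. -/
def IsDomSet (G : SimpleGraph V) (S : Finset V) : Prop :=
  ∀ v, v ∉ S → ∃ u ∈ S, G.Adj u v

/-- The domination number. -/
noncomputable def domNumber [Fintype V] (G : SimpleGraph V) : ℕ :=
  sInf {k | ∃ S : Finset V, S.card = k ∧ IsDomSet G S}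

variable [Fintype V] [LinearOrder V]

/-- Number of new (not yet dominated) vertices that `v` would dominate, given
that the vertices of `D` are already dominated. -/
def newScore (G : SimpleGraph V) [DecidableRel G.Adj] (D : Finset V) (v : V) : ℕ :=
  (closedNbhd G v \ D).card

/-- One run of the greedy domination algorithm (with fuel), starting with the
vertices of `D` already dominated.  At each step we pick a vertex dominating as
many new vertices as possible, ties broken by taking the earliest vertex in the
linear order on `V`. -/
def greedyAux (G : SimpleGraph V) [DecidableRel G.Adj] : ℕ → Finset V → List V
  | 0, _ => []
  | (n + 1), D =>
    if D = Finset.univ then []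
    else
      let C := Finset.univ.filter fun v => ∀ u, newScore G D u ≤ newScore G D v
      if h : C.Nonempty then
        C.min' h :: greedyAux G n (D ∪ closedNbhd G (C.min' h))
      else []

/-- The greedy dominating sequence of `G`. -/
def greedyList (G : SimpleGraph V) [DecidableRel G.Adj] : List V :=
  greedyAux G (Fintype.card V) ∅

/-- The greedy domination number: the length of the greedy dominating sequence. -/
def greedyNumber (G : SimpleGraph V) [DecidableRel G.Adj] : ℕ :=
  (greedyList G).length

/-- The index of the first vertex in the greedy dominating sequence which dominates `u`. -/
def stepOf (G : SimpleGraph V) [DecidableRel G.Adj] (u : V) : ℕ :=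
  (greedyList G).findIdx fun x => u ∈ closedNbhd G x

/-- `F(u)`: the set of vertices first dominated at the same greedy step as `u`. -/
def Fset (G : SimpleGraph V) [DecidableRel G.Adj] (u : V) : Finset V :=
  Finset.univ.filter fun w => stepOf G w = stepOf G u

end SG

theorem sum_one_div_card_filter_le_harmonic {ι α : Type*} [DecidableEq ι] [LinearOrder α]
    (s : Finset ι) (f : ι → α) :
    ∑ u ∈ s, (1 : ℝ) / #{w ∈ s | f u ≤ f w} ≤ harmonic #s := by
  induction s using Finset.induction_on_min_value f with
  | empty => simp
  | insert a s ha hmin ih =>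
    have hfirst : #{w ∈ insert a s | f a ≤ f w} = #s + 1 := by
      rw [filter_true_of_mem (by simpa using hmin), card_insert_of_notMem ha]
    have hrest : ∀ u ∈ s,
        (1 : ℝ) / #{w ∈ insert a s | f u ≤ f w} ≤ 1 / #{w ∈ s | f u ≤ f w} :=
      fun u hu => one_div_le_one_div_of_le (by exact_mod_cast card_pos.2 ⟨u, by simp [hu]⟩)
        (by exact_mod_cast card_le_card (filter_subset_filter _ (subset_insert a s)))
    rw [sum_insert ha, hfirst, card_insert_of_notMem ha, harmonic_succ]
    push_cast
    linarith [sum_le_sum hrest, one_div ((#s : ℝ) + 1)]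

theorem List.exists_mem_take_iff_findIdx_lt {α : Type*} {l : List α} {p : α → Bool}
    (hl : l.findIdx p < l.length) (i : ℕ) : (∃ x ∈ l.take i, p x) ↔ l.findIdx p < i := by
  rw [← List.findIdx_lt_length, List.findIdx_take, List.length_take]
  omega

namespace SG

variable {V : Type*} [Fintype V] [LinearOrder V] (G : SimpleGraph V) [DecidableRel G.Adj]

lemma mem_closedNbhd_self (v : V) : v ∈ closedNbhd G v := mem_insert_self _ _

lemma card_closedNbhd (v : V) : #(closedNbhd G v) = G.degree v + 1 := by
  rw [closedNbhd, card_insert_of_notMem (G.notMem_neighborFinset_self v),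
    G.card_neighborFinset_eq_degree]

lemma greedyAux_succ_of_ne_univ (n : ℕ) {D : Finset V} (hD : D ≠ univ) :
    ∃ c, (∀ w, newScore G D w ≤ newScore G D c) ∧
      greedyAux G (n + 1) D = c :: greedyAux G n (D ∪ closedNbhd G c) := by
  have hC : ({c | ∀ w, newScore G D w ≤ newScore G D c} : Finset V).Nonempty := by
    obtain ⟨w, -⟩ := not_forall.1 (mt eq_univ_iff_forall.2 hD)
    obtain ⟨c, -, hc⟩ := exists_max_image univ (newScore G D) ⟨w, mem_univ w⟩
    exact ⟨c, mem_filter.2 ⟨mem_univ c, fun w => hc w (mem_univ w)⟩⟩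
  exact ⟨_, (mem_filter.1 (min'_mem _ hC)).2, by rw [greedyAux, if_neg hD, dif_pos hC]⟩

lemma card_lt_card_union_closedNbhd_of_maximal {D : Finset V} (hD : D ≠ univ) {c : V}
    (hc : ∀ w, newScore G D w ≤ newScore G D c) : #D < #(D ∪ closedNbhd G c) := by
  obtain ⟨w, hwD⟩ := not_forall.1 (mt eq_univ_iff_forall.2 hD)
  have hw : 0 < newScore G D w := card_pos.2 ⟨w, mem_sdiff.2 ⟨mem_closedNbhd_self G w, hwD⟩⟩
  have := card_sdiff_add_card (closedNbhd G c) D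
  rw [union_comm]
  unfold newScore at hw hc
  linarith [hc w]

lemma mem_or_exists_mem_greedyAux (n : ℕ) (D : Finset V) (hn : Fintype.card V ≤ n + #D)
    (u : V) : u ∈ D ∨ ∃ x ∈ greedyAux G n D, u ∈ closedNbhd G x := by
  induction n generalizing D with
  | zero =>
    left
    rw [eq_univ_of_card D ((card_le_univ D).antisymm (by simpa using hn))]
    exact mem_univ u
  | succ n ih =>
    by_cases hD : D = univ
    · exact .inl (hD ▸ mem_univ u)
    obtain ⟨c, hc, hrun⟩ := greedyAux_succ_of_ne_univ G n hD
    have hgrow := card_lt_card_union_closedNbhd_of_maximal G hD hc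
    rw [hrun]
    rcases ih (D ∪ closedNbhd G c) (by omega) with hu | ⟨x, hx, hux⟩
    · rcases mem_union.1 hu with hu | hu
      · exact .inl hu
      · exact .inr ⟨c, List.mem_cons_self, hu⟩
    · exact .inr ⟨x, List.mem_cons_of_mem c hx, hux⟩

lemma newScore_le_greedyAux_getElem (n : ℕ) (D : Finset V) (i : ℕ)
    (hi : i < (greedyAux G n D).length) (w : V) :
    newScore G (D ∪ ((greedyAux G n D).take i).toFinset.biUnion (closedNbhd G)) w ≤
      newScore G (D ∪ ((greedyAux G n D).take i).toFinset.biUnion (closedNbhd G))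
        (greedyAux G n D)[i] := by
  induction n generalizing D i with
  | zero => simp [greedyAux] at hi
  | succ n ih =>
    by_cases hD : D = univ
    · simp [greedyAux, hD] at hi
    obtain ⟨c, hc, hrun⟩ := greedyAux_succ_of_ne_univ G n hD
    simp only [hrun] at hi ⊢
    cases i with
    | zero => simpa using hc w
    | succ i =>
      simpa [List.take_succ_cons, biUnion_insert, union_assoc] using
        ih (D ∪ closedNbhd G c) i (by simpa using hi)

lemma stepOf_lt_length (u : V) : stepOf G u < (greedyList G).length := by
  apply List.findIdx_lt_length_of_exists
  simpa [greedyList] using mem_or_exists_mem_greedyAux G _ ∅ (by simp) u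

lemma mem_biUnion_take_greedyList_iff {u : V} {i : ℕ} :
    u ∈ ((greedyList G).take i).toFinset.biUnion (closedNbhd G) ↔ stepOf G u < i := by
  simpa [stepOf] using List.exists_mem_take_iff_findIdx_lt (stepOf_lt_length G u) i

lemma card_filter_closedNbhd_le_greedyList_getElem (i : ℕ) (hi : i < (greedyList G).length)
    (w : V) :
    #{y ∈ closedNbhd G w | i ≤ stepOf G y} ≤
      #{y ∈ closedNbhd G (greedyList G)[i] | i ≤ stepOf G y} := by
  have hscore (x : V) :
      newScore G (∅ ∪ ((greedyList G).take i).toFinset.biUnion (closedNbhd G)) x =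
        #{y ∈ closedNbhd G x | i ≤ stepOf G y} := by
    rw [newScore, empty_union, sdiff_eq_filter]
    simp only [mem_biUnion_take_greedyList_iff, not_lt]
  rw [← hscore, ← hscore]
  exact newScore_le_greedyAux_getElem G _ ∅ i hi w

lemma filter_closedNbhd_greedyList_getElem_subset (i : ℕ) (hi : i < (greedyList G).length) :
    {y ∈ closedNbhd G (greedyList G)[i] | i ≤ stepOf G y} ⊆
      ({y | stepOf G y = i} : Finset V) := by
  intro y hy
  obtain ⟨hyi, hle⟩ := mem_filter.1 hy
  refine mem_filter.2 ⟨mem_univ y, le_antisymm (not_lt.1 fun hlt => ?_) hle⟩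
  simpa [hyi] using List.not_of_lt_findIdx hlt

lemma card_filter_stepOf_le_card_Fset (u v : V) :
    #{w ∈ closedNbhd G v | stepOf G u ≤ stepOf G w} ≤ #(Fset G u) :=
  (card_filter_closedNbhd_le_greedyList_getElem G _ (stepOf_lt_length G u) v).trans
    (card_le_card (filter_closedNbhd_greedyList_getElem_subset G _ (stepOf_lt_length G u)))

/-- with `w(u) = 1/|F(u)|`, for every vertex `v` we have
`∑_{u ∈ N[v]} w(u) ≤ 1 + ln(1 + Δ(G))`. -/
theorem greedy_weight_nbhd_le {V : Type*} [Fintype V] [LinearOrder V]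
    (G : SimpleGraph V) [DecidableRel G.Adj] (v : V) :
    ∑ u ∈ closedNbhd G v, (1 : ℝ) / ((Fset G u).card : ℝ)
      ≤ 1 + Real.log (1 + (G.maxDegree : ℝ)) := by
  have hcard : (#(closedNbhd G v) : ℝ) ≤ 1 + G.maxDegree := by
    rw [card_closedNbhd, add_comm]
    exact_mod_cast Nat.add_le_add_left (G.degree_le_maxDegree v) 1
  calc ∑ u ∈ closedNbhd G v, (1 : ℝ) / #(Fset G u)
      ≤ ∑ u ∈ closedNbhd G v,
          (1 : ℝ) / #{w ∈ closedNbhd G v | stepOf G u ≤ stepOf G w} :=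
        sum_le_sum fun u hu => one_div_le_one_div_of_le
          (Nat.cast_pos.2 <| card_pos.2 ⟨u, mem_filter.2 ⟨hu, le_rfl⟩⟩)
          (by exact_mod_cast card_filter_stepOf_le_card_Fset G u v)
    _ ≤ harmonic #(closedNbhd G v) := sum_one_div_card_filter_le_harmonic _ _
    _ ≤ 1 + Real.log #(closedNbhd G v) := harmonic_le_one_add_log _
    _ ≤ 1 + Real.log (1 + G.maxDegree) := by
      gcongr
      exact_mod_cast card_pos.2 ⟨v, mem_closedNbhd_self G v⟩

end SG
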